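/- arXiv:1901.03372 — 9 statements merged into one kernel-verified Lean document; each statement's English description precedes it below -/
import Mathlib

section
/- Let p be a prime, let G be a finite noncyclic p-group, and let K be a homomorphic image of G (i.e., there is a surjective group homomorphism from G onto K). If K is not powerful, then σ_P(K) ≤ σ_P(G). -/
/-- A finite `p`-group `H` is *powerful* if, when `p` is odd, `[H,H]` is contained in the
subgroup generated by `p`-th powers, and when `p = 2`, `[H,H]` is contained in the subgroup
generated by fourth powers. -/
def IsPowerful (p : ℕ) (H : Type*) [Group H] : Prop :=
  commutator H ≤ Subgroup.closure {x : H | ∃ g : H, x = g ^ (if p = 2 then 4 else p)}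

/-- A cover of a group by proper subgroups. -/
def IsSubgroupCover {G : Type*} [Group G] (S : Finset (Subgroup G)) : Prop :=
  (∀ H ∈ S, H ≠ ⊤) ∧ ∀ g : G, ∃ H ∈ S, g ∈ H

/-- The powerful covering number `σ_P(G)`: the least number of subgroups in a cover of `G`
by proper powerful subgroups. -/
noncomputable def powerfulCoveringNumber (p : ℕ) (G : Type*) [Group G] : ℕ :=
  sInf {n : ℕ | ∃ S : Finset (Subgroup G),
    S.card = n ∧ IsSubgroupCover S ∧ ∀ H ∈ S, IsPowerful p H}

/-!
Push a minimal cover of `G` by proper powerful subgroups forward along `α`. Homomorphic images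
of powerful groups are powerful, so the images are powerful subgroups of `K`, proper because `K`
is not powerful, and they cover `K` since `α` is onto. Non-cyclicity of `G` guarantees that a
minimal cover exists (otherwise `σ_P(G) = sInf ∅ = 0`): the cyclic subgroups are proper and
abelian, hence powerful.
-/

namespace IsPowerful

variable {p : ℕ} {A B : Type*} [Group A] [Group B]

theorem of_surjective (h : IsPowerful p A) {f : A →* B} (hf : Function.Surjective f) :
    IsPowerful p B := by
  unfold IsPowerful at *
  calc commutator B = (commutator A).map f := by
        rw [commutator_def, commutator_def, Subgroup.map_commutator,
          Subgroup.map_top_of_surjective f hf]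
    _ ≤ (Subgroup.closure {x : A | ∃ g : A, x = g ^ (if p = 2 then 4 else p)}).map f :=
        Subgroup.map_mono h
    _ = Subgroup.closure (f '' {x : A | ∃ g : A, x = g ^ (if p = 2 then 4 else p)}) :=
        MonoidHom.map_closure f _
    _ ≤ Subgroup.closure {x : B | ∃ g : B, x = g ^ (if p = 2 then 4 else p)} := by
        refine Subgroup.closure_mono ?_
        rintro _ ⟨_, ⟨g, rfl⟩, rfl⟩
        exact ⟨f g, map_pow f g _⟩

theorem map {H : Subgroup A} (h : IsPowerful p H) (f : A →* B) : IsPowerful p (H.map f) :=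
  h.of_surjective (f.subgroupMap_surjective H)

theorem of_isMulCommutative [IsMulCommutative A] : IsPowerful p A := by
  rw [IsPowerful, commutator_eq_bot]
  exact bot_le

theorem map_ne_top {H : Subgroup A} (hH : IsPowerful p H) (f : A →* B)
    (hB : ¬ IsPowerful p B) : H.map f ≠ ⊤ := by
  intro htop
  have hmap : IsPowerful p (H.map f) := hH.map f
  rw [htop] at hmap
  exact hB (hmap.of_surjective (f := (Subgroup.topEquiv : (⊤ : Subgroup B) ≃* B).toMonoidHom)
    (MulEquiv.surjective _))

end IsPowerful

namespace IsSubgroupCover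

variable {G K : Type*} [Group G] [Group K]

theorem image_map [DecidableEq (Subgroup K)] {S : Finset (Subgroup G)}
    (hS : IsSubgroupCover S) {f : G →* K} (hf : Function.Surjective f)
    (hproper : ∀ H ∈ S, H.map f ≠ ⊤) :
    IsSubgroupCover (S.image (Subgroup.map f)) := by
  refine ⟨?_, fun k => ?_⟩
  · simp only [Finset.mem_image, forall_exists_index, and_imp, forall_apply_eq_imp_iff₂]
    exact hproper
  · obtain ⟨g, rfl⟩ := hf k
    obtain ⟨H, hH, hg⟩ := hS.2 g
    exact ⟨H.map f, Finset.mem_image_of_mem _ hH, Subgroup.mem_map_of_mem f hg⟩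

theorem zpowers_of_not_isCyclic [Fintype G] [DecidableEq (Subgroup G)] (hG : ¬ IsCyclic G) :
    IsSubgroupCover (Finset.univ.image (Subgroup.zpowers : G → Subgroup G)) := by
  refine ⟨?_, fun g =>
    ⟨_, Finset.mem_image_of_mem _ (Finset.mem_univ g), Subgroup.mem_zpowers g⟩⟩
  simp only [Finset.mem_image, Finset.mem_univ, true_and, forall_exists_index,
    forall_apply_eq_imp_iff]
  intro g htop
  exact hG (isCyclic_iff_exists_zpowers_eq_top.mpr ⟨g, htop⟩)

end IsSubgroupCover

section PowerfulCoveringNumber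

variable {p : ℕ} {G K : Type*} [Group G] [Group K]

theorem powerfulCoveringNumber_le_card {S : Finset (Subgroup G)} (hS : IsSubgroupCover S)
    (hpow : ∀ H ∈ S, IsPowerful p H) : powerfulCoveringNumber p G ≤ S.card :=
  Nat.sInf_le ⟨S, rfl, hS, hpow⟩

theorem exists_card_eq_powerfulCoveringNumber {S : Finset (Subgroup G)} (hS : IsSubgroupCover S)
    (hpow : ∀ H ∈ S, IsPowerful p H) :
    ∃ T : Finset (Subgroup G), T.card = powerfulCoveringNumber p G ∧ IsSubgroupCover T ∧
      ∀ H ∈ T, IsPowerful p H :=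
  Nat.sInf_mem (s := {n | ∃ T : Finset (Subgroup G), T.card = n ∧ IsSubgroupCover T ∧
    ∀ H ∈ T, IsPowerful p H}) ⟨_, S, rfl, hS, hpow⟩

theorem exists_card_eq_powerfulCoveringNumber_of_not_isCyclic [Finite G] (hG : ¬ IsCyclic G) :
    ∃ T : Finset (Subgroup G), T.card = powerfulCoveringNumber p G ∧ IsSubgroupCover T ∧
      ∀ H ∈ T, IsPowerful p H := by
  classical
  have := Fintype.ofFinite G
  refine exists_card_eq_powerfulCoveringNumber (IsSubgroupCover.zpowers_of_not_isCyclic hG) ?_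
  simp only [Finset.mem_image, forall_exists_index, and_imp, forall_apply_eq_imp_iff₂]
  exact fun _ _ => IsPowerful.of_isMulCommutative

theorem powerfulCoveringNumber_le_card_of_surjective {f : G →* K} (hf : Function.Surjective f)
    (hK : ¬ IsPowerful p K) {S : Finset (Subgroup G)} (hS : IsSubgroupCover S)
    (hpow : ∀ H ∈ S, IsPowerful p H) : powerfulCoveringNumber p K ≤ S.card := by
  classical
  calc powerfulCoveringNumber p K ≤ (S.image (Subgroup.map f)).card := by
        refine powerfulCoveringNumber_le_card
          (hS.image_map hf fun H hH => (hpow H hH).map_ne_top f hK) ?_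
        simp only [Finset.mem_image, forall_exists_index, and_imp, forall_apply_eq_imp_iff₂]
        exact fun H hH => (hpow H hH).map f
    _ ≤ S.card := Finset.card_image_le

end PowerfulCoveringNumber

theorem powerfulCoveringNumber_image_le_general
    (p : ℕ) (G K : Type*) [Group G] [Finite G] [Group K]
    (hnc : ¬ IsCyclic G)
    (α : G →* K) (hα : Function.Surjective α)
    (hK : ¬ IsPowerful p K) :
    powerfulCoveringNumber p K ≤ powerfulCoveringNumber p G := by
  obtain ⟨S, hScard, hS, hpow⟩ :=
    exists_card_eq_powerfulCoveringNumber_of_not_isCyclic (p := p) hnc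
  exact hScard ▸ powerfulCoveringNumber_le_card_of_surjective hα hK hS hpow

/-- If `K` is a non-powerful homomorphic image of the finite noncyclic `p`-group `G`,
then `σ_P(K) ≤ σ_P(G)`. -/
theorem powerfulCoveringNumber_image_le
    (p : ℕ) (hp : p.Prime) (G K : Type*) [Group G] [Finite G] [Group K]
    (hG : IsPGroup p G) (hnc : ¬ IsCyclic G)
    (α : G →* K) (hα : Function.Surjective α)
    (hK : ¬ IsPowerful p K) :
    powerfulCoveringNumber p K ≤ powerfulCoveringNumber p G :=
  powerfulCoveringNumber_image_le_general p G K hnc α hα hK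
end

section
/- Let p be a prime, let G be a finite noncyclic p-group that is not powerful, and let K be a powerful finite p-group. Then σ_P(G × K) = σ_P(G). -/
open Subgroup

lemma isPowerful_of_surjective {p : ℕ} {A B : Type*} [Group A] [Group B]
    (f : A →* B) (hf : Function.Surjective f) (hA : IsPowerful p A) : IsPowerful p B := by
  set q := if p = 2 then 4 else p with hq
  have h1 : commutator B = Subgroup.map f (commutator A) := by
    rw [commutator_def, commutator_def, Subgroup.map_commutator,
      Subgroup.map_top_of_surjective f hf]
  rw [IsPowerful, ← hq, h1]
  calc Subgroup.map f (commutator A)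
      ≤ Subgroup.map f (Subgroup.closure {x : A | ∃ g : A, x = g ^ q}) := Subgroup.map_mono hA
    _ = Subgroup.closure (f '' {x : A | ∃ g : A, x = g ^ q}) := MonoidHom.map_closure f _
    _ ≤ Subgroup.closure {x : B | ∃ g : B, x = g ^ q} := by
        apply Subgroup.closure_mono
        rintro _ ⟨x, ⟨g, rfl⟩, rfl⟩
        exact ⟨f g, map_pow f g q⟩

lemma isPowerful_congr {p : ℕ} {A B : Type*} [Group A] [Group B] (e : A ≃* B)
    (hA : IsPowerful p A) : IsPowerful p B :=
  isPowerful_of_surjective e.toMonoidHom e.surjective hA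

lemma isPowerful_prod {p : ℕ} {A B : Type*} [Group A] [Group B]
    (hA : IsPowerful p A) (hB : IsPowerful p B) : IsPowerful p (A × B) := by
  set q := if p = 2 then 4 else p with hq
  rw [IsPowerful, ← hq, commutator_def, ← Subgroup.top_prod_top,
    Subgroup.commutator_prod_prod, Subgroup.prod_le_iff]
  constructor
  · calc Subgroup.map (MonoidHom.inl A B) ⁅(⊤ : Subgroup A), ⊤⁆
        ≤ Subgroup.map (MonoidHom.inl A B) (Subgroup.closure {x : A | ∃ g : A, x = g ^ q}) :=
          Subgroup.map_mono hA
      _ = Subgroup.closure ((MonoidHom.inl A B) '' {x : A | ∃ g : A, x = g ^ q}) :=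
          MonoidHom.map_closure _ _
      _ ≤ _ := by
          apply Subgroup.closure_mono
          rintro _ ⟨x, ⟨g, rfl⟩, rfl⟩
          exact ⟨(g, 1), by simp⟩
  · calc Subgroup.map (MonoidHom.inr A B) ⁅(⊤ : Subgroup B), ⊤⁆
        ≤ Subgroup.map (MonoidHom.inr A B) (Subgroup.closure {x : B | ∃ g : B, x = g ^ q}) :=
          Subgroup.map_mono hB
      _ = Subgroup.closure ((MonoidHom.inr A B) '' {x : B | ∃ g : B, x = g ^ q}) :=
          MonoidHom.map_closure _ _
      _ ≤ _ := by
          apply Subgroup.closure_mono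
          rintro _ ⟨x, ⟨g, rfl⟩, rfl⟩
          exact ⟨(1, g), by simp⟩

lemma map_fst_prod_top {G K : Type*} [Group G] [Group K] (H : Subgroup G) :
    Subgroup.map (MonoidHom.fst G K) (H.prod ⊤) = H := by
  ext g
  constructor
  · rintro ⟨⟨a, b⟩, ⟨ha, -⟩, rfl⟩; exact ha
  · intro hg; exact ⟨(g, 1), ⟨hg, trivial⟩, rfl⟩

/-- If `G` is a finite noncyclic non-powerful `p`-group and `K` is a powerful finite
`p`-group, then `σ_P(G × K) = σ_P(G)`. -/
theorem powerfulCoveringNumber_prod_powerful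
    (p : ℕ) (hp : p.Prime) (G K : Type*) [Group G] [Finite G] [Group K] [Finite K]
    (hG : IsPGroup p G) (hGnc : ¬ IsCyclic G) (hGnp : ¬ IsPowerful p G)
    (hK : IsPGroup p K) (hKpow : IsPowerful p K) :
    powerfulCoveringNumber p (G × K) = powerfulCoveringNumber p G := by
  classical
  set SG := {n : ℕ | ∃ S : Finset (Subgroup G),
    S.card = n ∧ IsSubgroupCover S ∧ ∀ H ∈ S, IsPowerful p H} with hSGdef
  set SGK := {n : ℕ | ∃ S : Finset (Subgroup (G × K)),
    S.card = n ∧ IsSubgroupCover S ∧ ∀ H ∈ S, IsPowerful p H} with hSGKdef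
  have hG' : powerfulCoveringNumber p G = sInf SG := rfl
  have hGK' : powerfulCoveringNumber p (G × K) = sInf SGK := rfl
  have forward : ∀ n ∈ SG, n ∈ SGK := by
    rintro n ⟨S, hcard, ⟨hproper, hcov⟩, hpow⟩
    refine ⟨S.image (fun H => H.prod (⊤ : Subgroup K)), ?_, ⟨?_, ?_⟩, ?_⟩
    · rw [Finset.card_image_of_injective _ ?_, hcard]
      intro H1 H2 h
      have := congrArg (Subgroup.map (MonoidHom.fst G K)) h
      simpa [map_fst_prod_top] using this
    · rintro A hA
      simp only [Finset.mem_image] at hA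
      obtain ⟨H, hH, rfl⟩ := hA
      intro htop
      refine hproper H hH ?_
      rw [← map_fst_prod_top (K := K) H, htop,
        Subgroup.map_top_of_surjective _ Prod.fst_surjective]
    · rintro ⟨g, k⟩
      obtain ⟨H, hH, hg⟩ := hcov g
      exact ⟨H.prod ⊤, Finset.mem_image_of_mem _ hH, ⟨hg, trivial⟩⟩
    · intro A hA
      simp only [Finset.mem_image] at hA
      obtain ⟨H, hH, rfl⟩ := hA
      exact isPowerful_congr (Subgroup.prodEquiv H ⊤).symm
        (isPowerful_prod (hpow H hH) (isPowerful_congr Subgroup.topEquiv.symm hKpow))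
  have backward : ∀ n ∈ SGK, ∃ m ∈ SG, m ≤ n := by
    rintro n ⟨S, hcard, ⟨hproper, hcov⟩, hpow⟩
    refine ⟨(S.image (Subgroup.map (MonoidHom.fst G K))).card,
      ⟨_, rfl, ⟨?_, ?_⟩, ?_⟩, by rw [← hcard]; exact Finset.card_image_le⟩
    · rintro A hA
      simp only [Finset.mem_image] at hA
      obtain ⟨H, hH, rfl⟩ := hA
      intro htop
      apply hGnp
      refine isPowerful_of_surjective ((MonoidHom.fst G K).comp H.subtype) ?_ (hpow H hH)
      intro g
      have hg : g ∈ Subgroup.map (MonoidHom.fst G K) H := htop ▸ Subgroup.mem_top g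
      obtain ⟨x, hx, rfl⟩ := hg
      exact ⟨⟨x, hx⟩, rfl⟩
    · intro g
      obtain ⟨H, hH, hg⟩ := hcov (g, 1)
      exact ⟨_, Finset.mem_image_of_mem _ hH, ⟨(g, 1), hg, rfl⟩⟩
    · intro A hA
      simp only [Finset.mem_image] at hA
      obtain ⟨H, hH, rfl⟩ := hA
      exact isPowerful_of_surjective ((MonoidHom.fst G K).subgroupMap H)
        ((MonoidHom.fst G K).subgroupMap_surjective H) (hpow H hH)
  rcases eq_or_ne SG ∅ with hE | hNE
  · have hE2 : SGK = ∅ := by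
      rw [Set.eq_empty_iff_forall_notMem]
      intro n hn
      obtain ⟨m, hm, _⟩ := backward n hn
      rw [hE] at hm
      exact hm
    rw [hG', hGK', hE, hE2]
  · have hNE' : SG.Nonempty := Set.nonempty_iff_ne_empty.mpr hNE
    have h1 : sInf SGK ≤ sInf SG := Nat.sInf_le (forward _ (Nat.sInf_mem hNE'))
    have hNE2 : SGK.Nonempty := ⟨_, forward _ (Nat.sInf_mem hNE')⟩
    obtain ⟨m, hm, hmle⟩ := backward _ (Nat.sInf_mem hNE2)
    rw [hG', hGK']
    exact le_antisymm h1 ((Nat.sInf_le hm).trans hmle)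
end

section
/- Let n ≥ 2. The dihedral group DihedralGroup (2^n) of order 2^(n+1) has exactly three maximal subgroups; among them, exactly one is cyclic of order 2^n (namely the subgroup of all rotations, generated by r 1) and the other two are isomorphic to the dihedral group DihedralGroup (2^(n-1)) of order 2^n. -/
/-!
A maximal subgroup of a finite `p`-group has index `p`, so the maximal subgroups of
`DihedralGroup (2 * k)` (`k = 2 ^ (n - 1)`) are its subgroups of index two. Such a subgroup
contains every square, hence every even rotation, and is then pinned down by which of `r 1`,
`sr 0`, `sr 1` it contains: modulo even rotations each of them is the product of the other two.
The three candidates are the rotations and the images of the embeddings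
`r j ↦ r (2 * j)`, `sr j ↦ sr (2 * j + a)` of `DihedralGroup k` for `a = 0, 1`; the latter are
not cyclic because `DihedralGroup k` is cyclic only for `k = 1`.
-/

open DihedralGroup Subgroup

section MaximalSubgroups

variable {G : Type*} [Group G]

theorem Subgroup.isCoatom_of_index_prime {H : Subgroup G} (hH : H.index.Prime) :
    IsCoatom H := by
  refine ⟨fun h => hH.ne_one (index_eq_one.mpr h), fun K hHK => index_eq_one.mp ?_⟩
  have hrel : H.relIndex K ≠ 1 := fun h => hHK.not_ge (relIndex_eq_one.mp h)
  rw [← relIndex_mul_index hHK.le, Nat.prime_mul_iff] at hH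
  exact (hH.resolve_right fun h => hrel h.2).2

theorem Subgroup.eq_of_le_of_index_eq {H K : Subgroup G} [H.FiniteIndex] (hle : H ≤ K)
    (h : H.index = K.index) : H = K :=
  hle.eq_of_not_lt fun hlt => (index_strictAnti hlt).ne' h

/-- The coatom lies below a subgroup of the next `p`-power order, which must then be `⊤`. -/
theorem IsPGroup.index_eq_of_isCoatom [Finite G] {p : ℕ} [hp : Fact p.Prime]
    (hG : IsPGroup p G) {H : Subgroup G} (hH : IsCoatom H) : H.index = p := by
  obtain ⟨N, hN⟩ := IsPGroup.iff_card.mp hG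
  obtain ⟨k, hkN, hk⟩ := (Nat.dvd_prime_pow hp.out).mp (hN ▸ H.card_subgroup_dvd_card)
  have hkN : k < N := hkN.lt_of_ne fun h => hH.1 (H.eq_top_of_card_eq (by rw [hk, hN, h]))
  obtain ⟨K, hKcard, hHK⟩ := Sylow.exists_subgroup_card_pow_succ (hN ▸ pow_dvd_pow p hkN) hk
  have hK : K = ⊤ := hH.2 K <| hHK.lt_of_ne <| by
    rintro rfl
    exact (Nat.pow_lt_pow_succ hp.out.one_lt).ne (hk.symm.trans hKcard)
  have hmul := H.card_mul_index
  rw [hk, ← card_top, ← hK, hKcard, pow_succ] at hmul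
  exact Nat.eq_of_mul_eq_mul_left (pow_pos hp.out.pos k) hmul

theorem IsPGroup.isCoatom_iff_index_eq [Finite G] {p : ℕ} [hp : Fact p.Prime]
    (hG : IsPGroup p G) {H : Subgroup G} : IsCoatom H ↔ H.index = p :=
  ⟨hG.index_eq_of_isCoatom, fun h => isCoatom_of_index_prime (h ▸ hp.out)⟩

end MaximalSubgroups

namespace ZMod

def doubling (k : ℕ) : ZMod k →+ ZMod (2 * k) :=
  lift k ⟨zmultiplesHom _ 2, by simpa [mul_comm] using natCast_self (2 * k)⟩

theorem doubling_intCast (k : ℕ) (z : ℤ) : doubling k z = 2 * z := by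
  simp [doubling, lift_coe, mul_comm]

theorem doubling_injective (k : ℕ) : Function.Injective (doubling k) := by
  rw [injective_iff_map_eq_zero]
  intro j hj
  obtain ⟨z, rfl⟩ := intCast_surjective j
  rw [doubling_intCast, ← Int.cast_two, ← Int.cast_mul, intCast_zmod_eq_zero_iff_dvd] at hj
  rw [intCast_zmod_eq_zero_iff_dvd]
  push_cast at hj
  exact (mul_dvd_mul_iff_left two_ne_zero).mp hj

theorem doubling_ne_one (k : ℕ) (j : ZMod k) : doubling k j ≠ 1 := by
  obtain ⟨z, rfl⟩ := intCast_surjective j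
  intro h
  have := congrArg (castHom (dvd_mul_right 2 k) (ZMod 2)) h
  rw [doubling_intCast, map_mul, map_one, map_ofNat] at this
  generalize castHom (dvd_mul_right 2 k) (ZMod 2) (z : ZMod (2 * k)) = x at this
  revert x
  decide

end ZMod

namespace DihedralGroup

variable {k m : ℕ}

def mapOfAddHom (φ : ZMod k →+ ZMod m) (a : ZMod m) : DihedralGroup k →* DihedralGroup m where
  toFun
    | r i => r (φ i)
    | sr i => sr (φ i + a)
  map_one' := by rw [one_def]; exact congrArg r (map_zero φ)
  map_mul' := by
    rintro (i | i) (j | j) <;>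
      simp only [r_mul_r, r_mul_sr, sr_mul_r, sr_mul_sr, map_add, map_sub] <;>
      congr 1 <;> abel

@[simp]
theorem mapOfAddHom_r (φ : ZMod k →+ ZMod m) (a : ZMod m) (i : ZMod k) :
    mapOfAddHom φ a (r i) = r (φ i) := rfl

@[simp]
theorem mapOfAddHom_sr (φ : ZMod k →+ ZMod m) (a : ZMod m) (i : ZMod k) :
    mapOfAddHom φ a (sr i) = sr (φ i + a) := rfl

theorem mapOfAddHom_injective {φ : ZMod k →+ ZMod m} (hφ : Function.Injective φ) (a : ZMod m) :
    Function.Injective (mapOfAddHom φ a) := by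
  rintro (i | i) (j | j) h <;> simp only [mapOfAddHom_r, mapOfAddHom_sr, r.injEq, sr.injEq,
    reduceCtorEq, add_left_inj] at h ⊢ <;>
    exact hφ h

theorem sr_mem_range_mapOfAddHom (φ : ZMod k →+ ZMod m) (a : ZMod m) :
    sr a ∈ (mapOfAddHom φ a).range :=
  ⟨sr 0, by rw [mapOfAddHom_sr, map_zero, zero_add]⟩

theorem sr_notMem_zpowers_r_one (i : ZMod m) : sr i ∉ zpowers (r 1 : DihedralGroup m) := by
  rw [mem_zpowers_iff]
  rintro ⟨z, hz⟩
  rw [r_one_zpow] at hz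
  cases hz

theorem index_zpowers_r_one [NeZero m] : (zpowers (r 1 : DihedralGroup m)).index = 2 := by
  have h := (zpowers (r 1 : DihedralGroup m)).card_mul_index
  rw [Nat.card_zpowers, orderOf_r_one, nat_card, mul_comm] at h
  exact Nat.eq_of_mul_eq_mul_right (Nat.pos_of_neZero m) h

theorem index_range_mapOfAddHom_doubling [NeZero k] (a : ZMod (2 * k)) :
    (mapOfAddHom (ZMod.doubling k) a).range.index = 2 := by
  have h := (mapOfAddHom (ZMod.doubling k) a).range.card_mul_index
  rw [← Nat.card_congr (MonoidHom.ofInjective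
    (mapOfAddHom_injective (ZMod.doubling_injective k) a)).toEquiv, nat_card, nat_card] at h
  exact Nat.eq_of_mul_eq_mul_left (by have := NeZero.ne k; omega) (h.trans (by ring))

theorem sr_one_notMem_range_mapOfAddHom_doubling_zero :
    sr 1 ∉ (mapOfAddHom (ZMod.doubling k) 0).range := by
  rintro ⟨i | j, h⟩
  · cases h
  · rw [mapOfAddHom_sr, add_zero, sr.injEq] at h
    exact ZMod.doubling_ne_one k j h

theorem range_mapOfAddHom_doubling_le {H : Subgroup (DihedralGroup (2 * k))} (hH : H.index = 2)
    {a : ZMod (2 * k)} (ha : sr a ∈ H) : (mapOfAddHom (ZMod.doubling k) a).range ≤ H := by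
  have hr : ∀ j, r (ZMod.doubling k j) ∈ H := by
    intro j
    obtain ⟨z, rfl⟩ := ZMod.intCast_surjective j
    have hsq : r (2 * (z : ZMod (2 * k))) = r z ^ 2 := by rw [sq, r_mul_r, ← two_mul]
    rw [ZMod.doubling_intCast, hsq]
    exact sq_mem_of_index_two hH _
  rintro _ ⟨i | j, rfl⟩
  · exact hr i
  · rw [mapOfAddHom_sr, add_comm, ← sr_mul_r]
    exact mul_mem ha (hr j)

theorem index_eq_two_iff [NeZero k] {H : Subgroup (DihedralGroup (2 * k))} :
    H.index = 2 ↔ H = zpowers (r 1) ∨ H = (mapOfAddHom (ZMod.doubling k) 0).range ∨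
      H = (mapOfAddHom (ZMod.doubling k) 1).range := by
  constructor
  · intro hH
    by_cases hr : (r 1 : DihedralGroup (2 * k)) ∈ H
    · exact .inl <| (eq_of_le_of_index_eq (zpowers_le.mpr hr)
        (index_zpowers_r_one.trans hH.symm)).symm
    by_cases h0 : (sr 0 : DihedralGroup (2 * k)) ∈ H
    · exact .inr <| .inl <| (eq_of_le_of_index_eq (range_mapOfAddHom_doubling_le hH h0)
        ((index_range_mapOfAddHom_doubling 0).trans hH.symm)).symm
    have h1 : sr 1 ∈ H := by
      rw [← zero_add 1, ← sr_mul_r, mul_mem_iff_of_index_two hH]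
      exact iff_of_false h0 hr
    exact .inr <| .inr <| (eq_of_le_of_index_eq (range_mapOfAddHom_doubling_le hH h1)
      ((index_range_mapOfAddHom_doubling 1).trans hH.symm)).symm
  · rintro (rfl | rfl | rfl)
    · exact index_zpowers_r_one
    · exact index_range_mapOfAddHom_doubling 0
    · exact index_range_mapOfAddHom_doubling 1

end DihedralGroup

/-- `DihedralGroup (2^n)` (`n ≥ 2`) has exactly three maximal subgroups: the cyclic
rotation subgroup `⟨r 1⟩` of order `2^n`, and two noncyclic subgroups isomorphic to
`DihedralGroup (2^(n-1))`. -/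
theorem dihedral_maximal_subgroups (n : ℕ) (hn : 2 ≤ n) :
    ∃ M₁ M₂ M₃ : Subgroup (DihedralGroup (2 ^ n)),
      M₁ ≠ M₂ ∧ M₁ ≠ M₃ ∧ M₂ ≠ M₃ ∧
      {M : Subgroup (DihedralGroup (2 ^ n)) | IsCoatom M} = {M₁, M₂, M₃} ∧
      M₁ = Subgroup.zpowers (r (1 : ZMod (2 ^ n))) ∧
      IsCyclic M₁ ∧ Nat.card M₁ = 2 ^ n ∧
      ¬ IsCyclic M₂ ∧ ¬ IsCyclic M₃ ∧
      Nonempty (M₂ ≃* DihedralGroup (2 ^ (n - 1))) ∧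
      Nonempty (M₃ ≃* DihedralGroup (2 ^ (n - 1))) := by
  have hcoatom (M : Subgroup (DihedralGroup (2 ^ n))) : IsCoatom M ↔ M.index = 2 :=
    (IsPGroup.of_card (by rw [nat_card, pow_succ'])).isCoatom_iff_index_eq
  have hk : 2 ^ (n - 1) ≠ 1 := (Nat.one_lt_two_pow (by omega)).ne'
  rw [show 2 ^ n = 2 * 2 ^ (n - 1) by rw [← pow_succ']; congr; omega] at hcoatom ⊢
  set δ := ZMod.doubling (2 ^ (n - 1))
  let e (a : ZMod (2 * 2 ^ (n - 1))) :=
    MonoidHom.ofInjective (mapOfAddHom_injective (ZMod.doubling_injective _) a)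
  refine ⟨zpowers (r 1), (mapOfAddHom δ 0).range, (mapOfAddHom δ 1).range,
    ?_, ?_, ?_, ?_, rfl, inferInstance, ?_, ?_, ?_, ⟨(e 0).symm⟩, ⟨(e 1).symm⟩⟩
  · exact fun h => sr_notMem_zpowers_r_one 0 (h ▸ sr_mem_range_mapOfAddHom δ 0)
  · exact fun h => sr_notMem_zpowers_r_one 1 (h ▸ sr_mem_range_mapOfAddHom δ 1)
  · exact fun h =>
      sr_one_notMem_range_mapOfAddHom_doubling_zero (h ▸ sr_mem_range_mapOfAddHom δ 1)
  · exact Set.ext fun M => (hcoatom M).trans DihedralGroup.index_eq_two_iff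
  · rw [Nat.card_zpowers, orderOf_r_one]
  · exact fun h => not_isCyclic hk ((e 0).isCyclic.mpr h)
  · exact fun h => not_isCyclic hk ((e 1).isCyclic.mpr h)
end

section
/- Let n ≥ 2 and let {H_1, …, H_q} be any finite collection of proper subgroups of the dihedral group DihedralGroup (2^n) whose union is all of DihedralGroup (2^n). Then there is some index i with 1 ≤ i ≤ q such that H_i equals the rotation subgroup, i.e., the cyclic subgroup generated by r 1. -/
open DihedralGroup

/-- Any cover of `DihedralGroup (2^n)` (`n ≥ 2`) by proper subgroups must contain the
rotation subgroup `⟨r 1⟩`. -/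
theorem dihedral_cover_contains_rotation_subgroup (n : ℕ) (hn : 2 ≤ n)
    (S : Finset (Subgroup (DihedralGroup (2 ^ n))))
    (hproper : ∀ H ∈ S, H ≠ ⊤)
    (hcover : ∀ g : DihedralGroup (2 ^ n), ∃ H ∈ S, g ∈ H) :
    ∃ H ∈ S, H = Subgroup.zpowers (r (1 : ZMod (2 ^ n))) := by
  obtain ⟨H, hHS, hrH⟩ := hcover (r 1)
  refine ⟨H, hHS, ?_⟩
  have hle : Subgroup.zpowers (r (1 : ZMod (2 ^ n))) ≤ H :=
    Subgroup.zpowers_le.mpr hrH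
  have hpos : (2 : ℕ) ^ n ≠ 0 := by positivity
  haveI : NeZero ((2 : ℕ) ^ n) := ⟨hpos⟩
  have hcard : Nat.card (DihedralGroup (2 ^ n)) = 2 * 2 ^ n := by
    rw [Nat.card_eq_fintype_card, DihedralGroup.card]
  have hzcard : Nat.card (Subgroup.zpowers (r (1 : ZMod (2 ^ n)))) = 2 ^ n := by
    rw [Nat.card_zpowers, DihedralGroup.orderOf_r_one]
  have hidx : (Subgroup.zpowers (r (1 : ZMod (2 ^ n)))).index = 2 := by
    have := Subgroup.card_mul_index (Subgroup.zpowers (r (1 : ZMod (2 ^ n))))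
    rw [hzcard, hcard] at this
    exact Nat.eq_of_mul_eq_mul_left (Nat.pos_of_ne_zero hpos)
      (this.trans (mul_comm 2 (2 ^ n)))
  have hmul := Subgroup.relIndex_mul_index hle
  rw [hidx] at hmul
  have hdvd : H.index ∣ 2 := ⟨_, hmul.symm.trans (mul_comm _ _)⟩
  have hne : H.index ≠ 0 := Subgroup.index_ne_zero_of_finite
  rcases (Nat.le_of_dvd two_pos hdvd).lt_or_eq with h1 | h1
  · interval_cases h : H.index
    · exact absurd rfl hne
    · exact absurd (Subgroup.index_eq_one.mp h) (hproper H hHS)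
  · rw [h1] at hmul
    have : (Subgroup.zpowers (r (1 : ZMod (2 ^ n)))).relIndex H = 1 := by omega
    exact le_antisymm (Subgroup.relIndex_eq_one.mp this) hle
end

section
/- Let n ≥ 2 and let H be a subgroup of the dihedral group DihedralGroup (2^n) of order 2^(n+1). Then H is isomorphic to the Klein four-group ZMod 2 × ZMod 2 if and only if there exists i : ZMod (2^n) such that H is the subgroup generated by the two reflections sr i and sr (i + 2^(n-1)). -/
/-!
In `ZMod (2 * k)` the solutions of `a + a = 0` are exactly `0` and `k`, so `r (2^(n-1))` is the
only rotation of order two in `DihedralGroup (2^n)`. A Klein four subgroup has four elements, all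
squaring to one, so it cannot consist of rotations alone and contains some reflection `sr j`.
Multiplying by `sr j` turns its reflections `sr b` into rotations `r (b - j)` of order at most two,
which confines the subgroup to `{1, r c, sr j, sr (j + c)}` with `c = 2^(n-1)`. That set is a
subgroup of order four and exponent two, generated by its two reflections.
-/

open DihedralGroup

theorem ZMod.add_self_eq_zero_iff {m k : ℕ} (hm : m = 2 * k) (a : ZMod m) :
    a + a = 0 ↔ a = 0 ∨ a = k := by
  subst hm
  constructor
  · intro h
    obtain rfl | hk := eq_or_ne k 0
    · exact .inl (by simpa using h)
    have : NeZero (2 * k) := ⟨by omega⟩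
    refine ((neg_eq_self_iff a).1 (neg_eq_iff_add_eq_zero.2 h)).imp_right fun hval => ?_
    rw [← a.natCast_zmod_val]
    congr 1
    omega
  · rintro (rfl | rfl)
    · exact add_zero 0
    · rw [← Nat.cast_add, ← two_mul]
      exact ZMod.natCast_self _

theorem IsKleinFour.of_card_eq_four {G : Type*} [Group G] (hcard : Nat.card G = 4)
    (hsq : ∀ x : G, x * x = 1) : IsKleinFour G where
  card_four := hcard
  exponent_two := by
    have hdvd : Monoid.exponent G ∣ 2 :=
      Monoid.exponent_dvd_of_forall_pow_eq_one fun x => (sq x).trans (hsq x)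
    have hne : Monoid.exponent G ≠ 1 := by
      intro h
      have := Monoid.exp_eq_one_iff.1 h
      have := Nat.card_of_subsingleton (1 : G)
      omega
    exact ((Nat.dvd_prime Nat.prime_two).1 hdvd).resolve_left hne

theorem IsKleinFour.of_mulEquiv {G G' : Type*} [Group G] [Group G'] [IsKleinFour G']
    (e : G ≃* G') : IsKleinFour G :=
  .of_card_eq_four (by rw [Nat.card_congr e.toEquiv, card_four]) fun x =>
    e.injective (by rw [map_mul, mul_self, map_one])

theorem Subgroup.mul_self_eq_one_of_isKleinFour {G : Type*} [Group G] {H : Subgroup G}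
    [IsKleinFour H] {x : G} (hx : x ∈ H) : x * x = 1 :=
  congrArg Subtype.val (IsKleinFour.mul_self (⟨x, hx⟩ : H))

namespace DihedralGroup

variable {m : ℕ}

theorem r_mul_self_eq_one_iff (a : ZMod m) : r a * r a = 1 ↔ a + a = 0 := by
  rw [r_mul_r, one_def, r.injEq]

def kleinFourSubgroup (i c : ZMod m) (hc : c + c = 0) : Subgroup (DihedralGroup m) where
  carrier := {1, r c, sr i, sr (i + c)}
  one_mem' := Or.inl rfl
  mul_mem' := by
    have hneg : -c = c := neg_eq_of_add_eq_zero_left hc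
    rintro _ _ (rfl | rfl | rfl | rfl) (rfl | rfl | rfl | rfl) <;>
      simp [sub_eq_add_neg, add_assoc, hneg, hc]
  inv_mem' := by
    rintro _ (rfl | rfl | rfl | rfl) <;> simp [neg_eq_of_add_eq_zero_left hc]

theorem mem_kleinFourSubgroup {i c : ZMod m} {hc : c + c = 0} {x : DihedralGroup m} :
    x ∈ kleinFourSubgroup i c hc ↔ x = 1 ∨ x = r c ∨ x = sr i ∨ x = sr (i + c) :=
  Iff.rfl

theorem closure_sr_pair_eq_kleinFourSubgroup (i : ZMod m) {c : ZMod m} (hc : c + c = 0) :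
    Subgroup.closure {sr i, sr (i + c)} = kleinFourSubgroup i c hc := by
  apply le_antisymm
  · rw [Subgroup.closure_le]
    rintro _ (rfl | rfl)
    exacts [.inr (.inr (.inl rfl)), .inr (.inr (.inr rfl))]
  · have hi : sr i ∈ Subgroup.closure {sr i, sr (i + c)} := Subgroup.subset_closure (.inl rfl)
    have hic : sr (i + c) ∈ Subgroup.closure {sr i, sr (i + c)} :=
      Subgroup.subset_closure (.inr rfl)
    have hrc := Subgroup.mul_mem _ hi hic
    rw [sr_mul_sr, add_sub_cancel_left] at hrc
    rintro _ (rfl | rfl | rfl | rfl)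
    exacts [Subgroup.one_mem _, hrc, hi, hic]

theorem card_kleinFourSubgroup (i : ZMod m) {c : ZMod m} (hc : c + c = 0) (hc0 : c ≠ 0) :
    Nat.card (kleinFourSubgroup i c hc) = 4 := by
  rw [← SetLike.coe_sort_coe, Nat.card_coe_set_eq]
  show Set.ncard {1, r c, sr i, sr (i + c)} = 4
  rw [Set.ncard_insert_of_notMem, Set.ncard_insert_of_notMem, Set.ncard_pair]
  · simpa using hc0
  · simp
  · simp [one_def, -r_zero, Ne.symm hc0]

theorem isKleinFour_kleinFourSubgroup (i : ZMod m) {c : ZMod m} (hc : c + c = 0) (hc0 : c ≠ 0) :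
    IsKleinFour (kleinFourSubgroup i c hc) :=
  .of_card_eq_four (card_kleinFourSubgroup i hc hc0) <| by
    rintro ⟨_, rfl | rfl | rfl | rfl⟩ <;> ext <;> simp [hc]

section UniqueInvolution

variable {c : ZMod m} (hc : ∀ a : ZMod m, a + a = 0 ↔ a = 0 ∨ a = c)
  {H : Subgroup (DihedralGroup m)} [IsKleinFour H]
include hc

theorem eq_zero_or_eq_of_r_mem {a : ZMod m} (ha : r a ∈ H) : a = 0 ∨ a = c :=
  (hc a).1 ((r_mul_self_eq_one_iff a).1 (Subgroup.mul_self_eq_one_of_isKleinFour ha))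

theorem exists_sr_mem_of_isKleinFour : ∃ j, sr j ∈ H := by
  by_contra! hno
  have hsub : (H : Set (DihedralGroup m)) ⊆ {1, r c} := by
    rintro (a | a) ha
    · rcases eq_zero_or_eq_of_r_mem hc ha with rfl | rfl
      exacts [.inl one_def.symm, .inr rfl]
    · exact absurd ha (hno a)
  have hle := Set.ncard_le_ncard hsub
  rw [← Nat.card_coe_set_eq, SetLike.coe_sort_coe, IsKleinFour.card_four] at hle
  have := Set.ncard_insert_le (1 : DihedralGroup m) {r c}
  rw [Set.ncard_singleton] at this
  omega

theorem le_kleinFourSubgroup_of_isKleinFour {j : ZMod m} (hj : sr j ∈ H) :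
    H ≤ kleinFourSubgroup j c ((hc c).2 (.inr rfl)) := by
  intro x hx
  rw [mem_kleinFourSubgroup]
  cases x with
  | r a =>
    rcases eq_zero_or_eq_of_r_mem hc hx with rfl | rfl
    exacts [.inl one_def.symm, .inr (.inl rfl)]
  | sr b =>
    have hrot := Subgroup.mul_mem _ hj hx
    rw [sr_mul_sr] at hrot
    rcases eq_zero_or_eq_of_r_mem hc hrot with h | h
    · exact .inr (.inr (.inl (by rw [sub_eq_zero.1 h])))
    · exact .inr (.inr (.inr (by rw [← h, add_sub_cancel])))

theorem exists_eq_closure_sr_pair_of_isKleinFour (hc0 : c ≠ 0) :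
    ∃ j, H = Subgroup.closure {sr j, sr (j + c)} := by
  obtain ⟨j, hj⟩ := exists_sr_mem_of_isKleinFour (H := H) hc
  have hcc : c + c = 0 := (hc c).2 (.inr rfl)
  have := isKleinFour_kleinFourSubgroup j hcc hc0
  have : Finite (kleinFourSubgroup j c hcc) := IsKleinFour.instFinite
  refine ⟨j, ?_⟩
  rw [closure_sr_pair_eq_kleinFourSubgroup j hcc]
  exact Subgroup.eq_of_le_of_card_ge (le_kleinFourSubgroup_of_isKleinFour hc hj) (by simp)

end UniqueInvolution

end DihedralGroup

/-- A subgroup of `DihedralGroup (2^n)` (`n ≥ 2`) is isomorphic to the Klein four-group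
iff it is generated by two reflections `sr i` and `sr (i + 2^(n-1))`. -/
theorem dihedral_klein_four_subgroup_iff (n : ℕ) (hn : 2 ≤ n)
    (H : Subgroup (DihedralGroup (2 ^ n))) :
    Nonempty (H ≃* Multiplicative (ZMod 2 × ZMod 2)) ↔
      ∃ i : ZMod (2 ^ n),
        H = Subgroup.closure {sr i, sr (i + (2 ^ (n - 1) : ZMod (2 ^ n)))} := by
  set c : ZMod (2 ^ n) := 2 ^ (n - 1)
  have hm : 2 ^ n = 2 * 2 ^ (n - 1) := by rw [← pow_succ']; congr; omega
  have hc : ∀ a : ZMod (2 ^ n), a + a = 0 ↔ a = 0 ∨ a = c := by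
    simpa [c] using ZMod.add_self_eq_zero_iff hm
  have hc0 : c ≠ 0 := by
    have : ((2 ^ (n - 1) : ℕ) : ZMod (2 ^ n)) ≠ 0 := by
      rw [Ne, ZMod.natCast_eq_zero_iff]
      exact Nat.not_dvd_of_pos_of_lt (by positivity) (Nat.pow_lt_pow_right one_lt_two (by omega))
    simpa [c] using this
  have hcc : c + c = 0 := (hc c).2 (.inr rfl)
  constructor
  · rintro ⟨e⟩
    have := IsKleinFour.of_mulEquiv e
    exact exists_eq_closure_sr_pair_of_isKleinFour hc hc0
  · rintro ⟨i, rfl⟩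
    have := isKleinFour_kleinFourSubgroup i hcc hc0
    rw [closure_sr_pair_eq_kleinFourSubgroup i hcc]
    exact IsKleinFour.nonempty_mulEquiv
end

section
/- Let n ≥ 2. The dihedral group DihedralGroup (2^n) of order 2^(n+1) has exactly 2^(n-1) subgroups isomorphic to the Klein four-group ZMod 2 × ZMod 2. -/
/-!
In `DihedralGroup (2 * k)` the rotation `r j` commutes with the reflection `sr i` iff `2 * j = 0`,
i.e. `j ∈ {0, k}`, and two reflections `sr i`, `sr j` commute iff `2 * i = 2 * j`. So the
centralizer of a reflection `sr i` is the Klein four-group `{1, r k, sr i, sr (i + k)}`.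
Conversely, a Klein four subgroup contains a reflection (only two rotations square to `1`) and,
being abelian, lies in its centralizer, hence equals it by counting. The centralizers of `sr i`
and `sr j` coincide iff `2 * i = 2 * j`, i.e. iff `i` and `j` agree modulo `k`, so there are `k` of
them.
-/

open DihedralGroup

theorem Nat.card_eq_of_surjective_of_ker_eq {α β γ : Type*} {f : α → β} {g : α → γ}
    (hf : Function.Surjective f) (hg : Function.Surjective g) (h : Setoid.ker f = Setoid.ker g) :
    Nat.card β = Nat.card γ := by
  rw [← Nat.card_congr (Setoid.quotientKerEquivOfSurjective f hf),
    ← Nat.card_congr (Setoid.quotientKerEquivOfSurjective g hg), h]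

namespace IsKleinFour

variable {G G' : Type*} [Group G] [Group G']

theorem of_card_eq_four_of_mul_self (hcard : Nat.card G = 4) (hG : ∀ g : G, g * g = 1) :
    IsKleinFour G where
  card_four := hcard
  exponent_two := by
    have hdvd : Monoid.exponent G ∣ 2 := Monoid.exponent_dvd_of_forall_pow_eq_one fun g => by
      rw [sq, hG]
    have hne : Monoid.exponent G ≠ 1 := by
      have : Finite G := Nat.finite_of_card_ne_zero (by rw [hcard]; decide)
      rw [Ne, Monoid.exp_eq_one_iff, ← Finite.card_le_one_iff_subsingleton, hcard]
      decide
    rcases (Nat.dvd_prime Nat.prime_two).1 hdvd with h | h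
    exacts [absurd h hne, h]

theorem of_mulEquiv_s13 (e : G ≃* G') [IsKleinFour G'] : IsKleinFour G where
  card_four := (Nat.card_congr e.toEquiv).trans card_four
  exponent_two := (Monoid.exponent_eq_of_mulEquiv e).trans exponent_two

theorem iff_nonempty_mulEquiv :
    IsKleinFour G ↔ Nonempty (G ≃* Multiplicative (ZMod 2 × ZMod 2)) :=
  ⟨fun _ => nonempty_mulEquiv, fun ⟨e⟩ => of_mulEquiv_s13 e⟩

end IsKleinFour

namespace ZMod

theorem two_mul_eq_two_mul_iff_cast_eq {k : ℕ} (x y : ZMod (2 * k)) :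
    2 * x = 2 * y ↔ (x.cast : ZMod k) = y.cast := by
  obtain ⟨a, rfl⟩ := intCast_surjective x
  obtain ⟨b, rfl⟩ := intCast_surjective y
  have hk : k ∣ 2 * k := dvd_mul_left k 2
  rw [cast_intCast hk, cast_intCast hk, intCast_eq_intCast_iff_dvd_sub,
    ← Int.cast_two, ← Int.cast_mul, ← Int.cast_mul, intCast_eq_intCast_iff_dvd_sub,
    ← mul_sub, Nat.cast_mul, Nat.cast_two, mul_dvd_mul_iff_left two_ne_zero]

theorem two_mul_eq_zero_iff {k : ℕ} [NeZero k] (x : ZMod (2 * k)) :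
    2 * x = 0 ↔ x = 0 ∨ x = k := by
  have h := two_mul_eq_two_mul_iff_cast_eq x 0
  rw [mul_zero, cast_zero] at h
  rw [h, cast_eq_val, natCast_eq_zero_iff, ← val_eq_zero, ← (val_injective _).eq_iff,
    val_natCast, Nat.mod_eq_of_lt (by have := NeZero.pos k; omega)]
  have hx := val_lt x
  constructor
  · rintro ⟨t, ht⟩
    rw [ht] at hx ⊢
    have ht2 : t < 2 := by nlinarith [NeZero.pos k]
    interval_cases t <;> simp
  · rintro (h | h) <;> simp [h]

end ZMod

namespace DihedralGroup

open Subgroup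

section

variable {n : ℕ} {i j : ZMod n}

theorem r_mem_centralizer_sr_iff : r j ∈ centralizer {sr i} ↔ 2 * j = 0 := by
  rw [mem_centralizer_singleton_iff, r_mul_sr, sr_mul_r, sr.injEq]
  constructor <;> intro h <;> linear_combination -h

theorem sr_mem_centralizer_sr_iff : sr j ∈ centralizer {sr i} ↔ 2 * i = 2 * j := by
  rw [mem_centralizer_singleton_iff, sr_mul_sr, sr_mul_sr, r.injEq]
  constructor <;> intro h <;> linear_combination h

theorem centralizer_sr_eq_iff : centralizer {sr i} = centralizer {sr j} ↔ 2 * i = 2 * j := by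
  refine ⟨fun h => ?_, fun h => ?_⟩
  · have : sr j ∈ centralizer {sr i} := h ▸ mem_centralizer_singleton_iff.2 rfl
    exact sr_mem_centralizer_sr_iff.1 this
  · ext (m | m) <;> simp only [r_mem_centralizer_sr_iff, sr_mem_centralizer_sr_iff, h]

end

section

variable {k : ℕ} [NeZero k]

theorem coe_centralizer_sr (i : ZMod (2 * k)) :
    (centralizer {sr i} : Set (DihedralGroup (2 * k))) =
      {1, r k, sr i, sr (i + k : ZMod (2 * k))} := by
  ext (j | j)
  · simp [r_mem_centralizer_sr_iff, ZMod.two_mul_eq_zero_iff, one_def, -r_zero]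
  · have hsr : 2 * i = 2 * j ↔ 2 * (j - i) = 0 := by
      rw [mul_sub, sub_eq_zero, eq_comm]
    simp [sr_mem_centralizer_sr_iff, hsr, ZMod.two_mul_eq_zero_iff, sub_eq_iff_eq_add', one_def,
      -r_zero]

theorem card_centralizer_sr (i : ZMod (2 * k)) : Nat.card (centralizer {sr i}) = 4 := by
  have hk : (k : ZMod (2 * k)) ≠ 0 := by
    rw [Ne, ZMod.natCast_eq_zero_iff]
    exact fun h => absurd (Nat.le_of_dvd (NeZero.pos k) h) (by have := NeZero.pos k; omega)
  rw [← SetLike.coe_sort_coe, Nat.card_coe_set_eq, coe_centralizer_sr,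
    Set.ncard_insert_of_notMem (by simp [one_def, hk.symm, -r_zero]),
    Set.ncard_insert_of_notMem (by simp),
    Set.ncard_insert_of_notMem (by simpa using hk), Set.ncard_singleton]

theorem isKleinFour_centralizer_sr (i : ZMod (2 * k)) : IsKleinFour (centralizer {sr i}) := by
  refine .of_card_eq_four_of_mul_self (card_centralizer_sr i) fun ⟨x, hx⟩ => Subtype.ext ?_
  cases x with
  | r j => rw [coe_mul, r_mul_r, ← two_mul, r_mem_centralizer_sr_iff.1 hx, r_zero, coe_one]
  | sr j => exact sr_mul_self j

theorem exists_sr_mem_of_isKleinFour_s13 (H : Subgroup (DihedralGroup (2 * k))) [IsKleinFour H] :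
    ∃ i, sr i ∈ H := by
  by_contra! hH
  have hsub : (H : Set (DihedralGroup (2 * k))) ⊆ {1, r k} := by
    rintro (j | j) hj
    · have hsq : r j * r j = 1 := congrArg Subtype.val (IsKleinFour.mul_self (⟨r j, hj⟩ : H))
      rw [r_mul_r, ← two_mul, one_def, r.injEq, ZMod.two_mul_eq_zero_iff] at hsq
      rcases hsq with rfl | rfl
      exacts [.inl one_def.symm, .inr rfl]
    · exact absurd hj (hH j)
  have hcard : Nat.card H ≤ 2 := by
    rw [← SetLike.coe_sort_coe, Nat.card_coe_set_eq]
    exact (Set.ncard_le_ncard hsub).trans ((Set.ncard_insert_le _ _).trans (by simp))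
  rw [IsKleinFour.card_four] at hcard
  omega

theorem isKleinFour_iff_exists_eq_centralizer_sr (H : Subgroup (DihedralGroup (2 * k))) :
    IsKleinFour H ↔ ∃ i, H = centralizer {sr i} := by
  refine ⟨fun hH => ?_, fun ⟨i, hi⟩ => hi ▸ isKleinFour_centralizer_sr i⟩
  obtain ⟨i, hi⟩ := exists_sr_mem_of_isKleinFour_s13 H
  have hle : H ≤ centralizer {sr i} := fun x hx =>
    mem_centralizer_singleton_iff.2 <| congrArg Subtype.val <|
      IsKleinFour.isMulCommutative.is_comm.comm (⟨x, hx⟩ : H) ⟨sr i, hi⟩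
  refine ⟨i, eq_of_le_of_card_ge hle ?_⟩
  rw [card_centralizer_sr, IsKleinFour.card_four]

theorem card_isKleinFour_subgroups :
    Nat.card {H : Subgroup (DihedralGroup (2 * k)) // IsKleinFour H} = k := by
  let f (i : ZMod (2 * k)) : {H : Subgroup (DihedralGroup (2 * k)) // IsKleinFour H} :=
    ⟨centralizer {sr i}, isKleinFour_centralizer_sr i⟩
  have hf : Function.Surjective f := by
    rintro ⟨H, hH⟩
    obtain ⟨i, rfl⟩ := (isKleinFour_iff_exists_eq_centralizer_sr H).1 hH
    exact ⟨i, rfl⟩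
  have hker : Setoid.ker f = Setoid.ker (ZMod.castHom (dvd_mul_left k 2) (ZMod k)) :=
    Setoid.ext fun i j => Subtype.ext_iff.trans <|
      centralizer_sr_eq_iff.trans (ZMod.two_mul_eq_two_mul_iff_cast_eq i j)
  rw [Nat.card_eq_of_surjective_of_ker_eq hf (ZMod.castHom_surjective _) hker, Nat.card_zmod]

end

end DihedralGroup

/-- `DihedralGroup (2^n)` (`n ≥ 2`) has exactly `2^(n-1)` subgroups isomorphic to the
Klein four-group. -/
theorem dihedral_count_klein_four_subgroups (n : ℕ) (hn : 2 ≤ n) :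
    Nat.card {H : Subgroup (DihedralGroup (2 ^ n)) //
      Nonempty (H ≃* Multiplicative (ZMod 2 × ZMod 2))} = 2 ^ (n - 1) := by
  obtain ⟨k, rfl⟩ : ∃ k, n = k + 1 := ⟨n - 1, by omega⟩
  rw [pow_succ', Nat.add_sub_cancel]
  simp_rw [← IsKleinFour.iff_nonempty_mulEquiv]
  exact card_isKleinFour_subgroups
end

section
/- Let n ≥ 2. There exists a powerful cover of the dihedral group DihedralGroup (2^n) of order 2^(n+1) consisting of exactly 2^(n-1) + 1 proper powerful subgroups; in fact, all of these subgroups may be taken abelian. -/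
/-!
The rotations form an abelian subgroup. With `m = 2^(n-1)`, every reflection `sr j` lies in the
Klein four-group `{1, r m, sr j, sr (j + m)}`, which depends only on the class of `j` modulo
`⟨m⟩ = {0, m}`; this gives `2^(n-1)` further subgroups, abelian because all their elements are
involutions. Abelian groups are powerful, and an abelian subgroup is proper because the
dihedral group of order at least 8 is not abelian.
-/

open DihedralGroup

theorem mul_comm_of_mul_self_eq_one {G : Type*} [Group G] {x y : G} (hx : x * x = 1)
    (hy : y * y = 1) (hxy : x * y * (x * y) = 1) : x * y = y * x := by
  rw [eq_inv_of_mul_eq_one_left hxy, mul_inv_rev, inv_eq_of_mul_eq_one_left hx,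
    inv_eq_of_mul_eq_one_left hy]

theorem isPowerful_of_mul_comm {H : Type*} [Group H] (h : ∀ x y : H, x * y = y * x) (p : ℕ) :
    IsPowerful p H := by
  rw [IsPowerful, commutator_def,
    Subgroup.commutator_eq_bot_iff_le_centralizer.mpr fun x _ y _ => h y x]
  exact bot_le

theorem Subgroup.ne_top_of_mul_comm {G : Type*} [Group G] (hG : ¬IsMulCommutative G)
    {H : Subgroup G} (hH : ∀ x ∈ H, ∀ y ∈ H, x * y = y * x) : H ≠ ⊤ := by
  rintro rfl
  exact hG ⟨⟨fun x y => hH x trivial y trivial⟩⟩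

open AddSubgroup in
theorem ZMod.card_quotient_zmultiples_mul_two {N : ℕ} {a : ZMod N} (ha : a ≠ 0) (h2 : a + a = 0) :
    Nat.card (ZMod N ⧸ zmultiples a) * 2 = N := by
  rw [← addOrderOf_eq_prime (p := 2) (x := a) (by rwa [two_nsmul]) ha, ← Nat.card_zmultiples,
    ← card_eq_card_quotient_mul_card_addSubgroup, Nat.card_zmod]

theorem AddSubgroup.add_self_eq_zero_of_mem_zmultiples {A : Type*} [AddCommGroup A] {a : A}
    (h2 : a + a = 0) : ∀ i ∈ zmultiples a, i + i = 0 := by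
  rintro _ ⟨k, rfl⟩
  rw [← smul_add, h2, smul_zero]

namespace DihedralGroup

variable {N : ℕ}

def rotations (N : ℕ) : Subgroup (DihedralGroup N) where
  carrier := Set.range r
  mul_mem' := by rintro _ _ ⟨i, rfl⟩ ⟨j, rfl⟩; exact ⟨i + j, rfl⟩
  one_mem' := ⟨0, rfl⟩
  inv_mem' := by rintro _ ⟨i, rfl⟩; exact ⟨-i, rfl⟩

theorem r_mem_rotations (i : ZMod N) : r i ∈ rotations N := ⟨i, rfl⟩

theorem sr_notMem_rotations (i : ZMod N) : sr i ∉ rotations N := by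
  rintro ⟨j, h⟩
  cases h

theorem rotations_mul_comm : ∀ x ∈ rotations N, ∀ y ∈ rotations N, x * y = y * x := by
  rintro _ ⟨i, rfl⟩ _ ⟨j, rfl⟩
  rw [r_mul_r, r_mul_r, add_comm]

def cosetSubgroup (T : AddSubgroup (ZMod N)) (c : ZMod N ⧸ T) : Subgroup (DihedralGroup N) where
  carrier := {x | match x with
    | r i => i ∈ T
    | sr j => (j : ZMod N ⧸ T) = c}
  mul_mem' := by
    rintro (i | j) (i' | j') hx hy
    · exact T.add_mem hx hy
    · change ((j' - i : ZMod N) : ZMod N ⧸ T) = c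
      rw [QuotientAddGroup.mk_sub, (QuotientAddGroup.eq_zero_iff i).mpr hx, sub_zero]
      exact hy
    · change ((j + i' : ZMod N) : ZMod N ⧸ T) = c
      rw [QuotientAddGroup.mk_add, (QuotientAddGroup.eq_zero_iff i').mpr hy, add_zero]
      exact hx
    · change j' - j ∈ T
      rw [sub_eq_neg_add]
      exact QuotientAddGroup.eq.mp (hx.trans hy.symm)
  one_mem' := T.zero_mem
  inv_mem' := by
    rintro (i | j) h
    · exact T.neg_mem h
    · exact h

variable {T : AddSubgroup (ZMod N)} {c : ZMod N ⧸ T}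

@[simp]
theorem r_mem_cosetSubgroup {i : ZMod N} : r i ∈ cosetSubgroup T c ↔ i ∈ T := Iff.rfl

@[simp]
theorem sr_mem_cosetSubgroup {j : ZMod N} : sr j ∈ cosetSubgroup T c ↔ (j : ZMod N ⧸ T) = c :=
  Iff.rfl

theorem cosetSubgroup_injective : Function.Injective (cosetSubgroup (N := N) T) := by
  intro c c' h
  obtain ⟨j, rfl⟩ := QuotientAddGroup.mk_surjective c
  have : sr j ∈ cosetSubgroup T c' := h ▸ sr_mem_cosetSubgroup.mpr rfl
  exact sr_mem_cosetSubgroup.mp this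

theorem mul_self_eq_one_of_mem_cosetSubgroup (hT : ∀ i ∈ T, i + i = 0) {x : DihedralGroup N}
    (hx : x ∈ cosetSubgroup T c) : x * x = 1 := by
  cases x with
  | r i => rw [r_mul_r, hT i (r_mem_cosetSubgroup.mp hx), r_zero]
  | sr j => exact sr_mul_self j

theorem cosetSubgroup_mul_comm (hT : ∀ i ∈ T, i + i = 0) :
    ∀ x ∈ cosetSubgroup T c, ∀ y ∈ cosetSubgroup T c, x * y = y * x := fun _ hx _ hy =>
  mul_comm_of_mul_self_eq_one (mul_self_eq_one_of_mem_cosetSubgroup hT hx)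
    (mul_self_eq_one_of_mem_cosetSubgroup hT hy)
    (mul_self_eq_one_of_mem_cosetSubgroup hT (mul_mem hx hy))

theorem exists_abelian_cover [NeZero N] (hN : 2 < N) (T : AddSubgroup (ZMod N))
    (hT : ∀ i ∈ T, i + i = 0) :
    ∃ S : Finset (Subgroup (DihedralGroup N)),
      S.card = Nat.card (ZMod N ⧸ T) + 1 ∧
      (∀ H ∈ S, H ≠ ⊤) ∧
      (∀ g : DihedralGroup N, ∃ H ∈ S, g ∈ H) ∧
      (∀ H ∈ S, ∀ x ∈ H, ∀ y ∈ H, x * y = y * x) := by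
  classical
  have hcomm : ∀ H ∈ insert (rotations N) (Finset.univ.image (cosetSubgroup T)),
      ∀ x ∈ H, ∀ y ∈ H, x * y = y * x := by
    simp only [Finset.mem_insert, Finset.mem_image, Finset.mem_univ, true_and]
    rintro H (rfl | ⟨c, rfl⟩)
    exacts [rotations_mul_comm, cosetSubgroup_mul_comm hT]
  refine ⟨_, ?_, fun H hH => Subgroup.ne_top_of_mul_comm
    (not_commutative (by omega) (by omega)) (hcomm H hH), ?_, hcomm⟩
  · have hrot : rotations N ∉ Finset.univ.image (cosetSubgroup T) := by
      simp only [Finset.mem_image, Finset.mem_univ, true_and, not_exists]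
      intro c hc
      obtain ⟨j, rfl⟩ := QuotientAddGroup.mk_surjective c
      exact sr_notMem_rotations j (hc ▸ sr_mem_cosetSubgroup.mpr rfl)
    rw [Finset.card_insert_of_notMem hrot,
      Finset.card_image_of_injective _ cosetSubgroup_injective, Finset.card_univ,
      Nat.card_eq_fintype_card]
  · rintro (i | j)
    · exact ⟨rotations N, Finset.mem_insert_self _ _, r_mem_rotations i⟩
    · exact ⟨cosetSubgroup T j,
        Finset.mem_insert_of_mem (Finset.mem_image_of_mem _ (Finset.mem_univ _)),
        sr_mem_cosetSubgroup.mpr rfl⟩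

end DihedralGroup

/-- `DihedralGroup (2^n)` (`n ≥ 2`) has a powerful cover by `2^(n-1) + 1` proper powerful
subgroups, all of which may be taken abelian. -/
theorem dihedral_exists_powerful_cover (n : ℕ) (hn : 2 ≤ n) :
    ∃ S : Finset (Subgroup (DihedralGroup (2 ^ n))),
      S.card = 2 ^ (n - 1) + 1 ∧
      (∀ H ∈ S, H ≠ ⊤) ∧
      (∀ g : DihedralGroup (2 ^ n), ∃ H ∈ S, g ∈ H) ∧
      (∀ H ∈ S, IsPowerful 2 H) ∧
      (∀ H ∈ S, ∀ x ∈ H, ∀ y ∈ H, x * y = y * x) := by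
  have hpow : 2 ^ n = 2 ^ (n - 1) * 2 := by rw [← pow_succ, Nat.sub_add_cancel (by omega)]
  have hlt : 1 < 2 ^ (n - 1) := Nat.one_lt_two_pow (by omega)
  set a : ZMod (2 ^ n) := ((2 ^ (n - 1) : ℕ) : ZMod (2 ^ n))
  have ha : a ≠ 0 := by
    rw [Ne, ZMod.natCast_eq_zero_iff, Nat.pow_dvd_pow_iff_le_right (by norm_num)]
    omega
  have h2 : a + a = 0 := by
    rw [← Nat.cast_add, ← mul_two, ← hpow, ZMod.natCast_self]
  have hcard := ZMod.card_quotient_zmultiples_mul_two ha h2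
  obtain ⟨S, hS, hproper, hcover, hcomm⟩ := DihedralGroup.exists_abelian_cover (by omega) _
    (AddSubgroup.add_self_eq_zero_of_mem_zmultiples h2)
  refine ⟨S, by rw [hS]; omega, hproper, hcover, fun H hH => ?_, hcomm⟩
  exact isPowerful_of_mul_comm (fun x y => Subtype.ext (hcomm H hH x x.2 y y.2)) 2
end

section
/- Let n ≥ 2. The abelian covering number of the dihedral group DihedralGroup (2^n) of order 2^(n+1) equals its powerful covering number; both are equal to 2^(n-1) + 1. -/
open DihedralGroup

/-- The abelian covering number `σ_A(G)`: the least number of subgroups in a cover of `G`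
by proper abelian subgroups. -/
noncomputable def abelianCoveringNumber (G : Type*) [Group G] : ℕ :=
  sInf {n : ℕ | ∃ S : Finset (Subgroup G),
    S.card = n ∧ IsSubgroupCover S ∧ ∀ H ∈ S, ∀ x ∈ H, ∀ y ∈ H, x * y = y * x}

/-!
If a powerful subgroup `H` of `DihedralGroup (2^n)` contains a reflection `sr a`, then for every
rotation `r c ∈ H` the commutator `⁅sr a, sr (a + c)⁆ = r (2c)` must be a product of fourth
powers of elements of `H`; these are all rotations `r (4x)` with `r x ∈ H`. Iterating `2c = 4x`
pushes `2c` into `2^k` times the rotations of `H` for every `k`, so `2c = 0`. Hence such an `H`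
misses `r 1`, and two reflections `sr i`, `sr j` in it satisfy `2i = 2j`; so the `2^(n-1) + 1`
elements `r 1, sr 0, …, sr (2^(n-1) - 1)` need pairwise distinct members of any powerful cover.
The cyclic subgroup of rotations together with the Klein four-groups `⟨sr i, r 2^(n-1)⟩`,
`i < 2^(n-1)`, is an abelian cover of that size, and abelian subgroups are powerful.
-/

open scoped commutatorElement

theorem two_mul_eq_zero_of_forall_two_mul_eq_four_mul {R : Type*} [CommSemiring R] {s : Set R}
    {m : ℕ} (hm : (2 : R) ^ m = 0) (hs : ∀ c ∈ s, ∃ x ∈ s, 2 * c = 4 * x) :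
    ∀ c ∈ s, 2 * c = 0 := by
  have key : ∀ k : ℕ, ∀ c ∈ s, ∃ x ∈ s, 2 * c = 2 ^ (k + 1) * x := by
    intro k
    induction k with
    | zero => exact fun c hc => ⟨c, hc, by ring⟩
    | succ k ih =>
      intro c hc
      obtain ⟨x, hx, hcx⟩ := ih c hc
      obtain ⟨y, hy, hxy⟩ := hs x hx
      exact ⟨y, hy, by rw [hcx, pow_succ, mul_assoc, hxy]; ring⟩
  intro c hc
  obtain ⟨x, -, hcx⟩ := key m c hc
  rw [hcx, pow_succ, hm, zero_mul, zero_mul]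

theorem isPowerful_two_iff {G : Type*} [Group G] :
    IsPowerful 2 G ↔ commutator G ≤ Subgroup.closure {x : G | ∃ g : G, x = g ^ 4} :=
  Iff.rfl

theorem isPowerful_of_isMulCommutative {G : Type*} [Group G] (p : ℕ) (hG : IsMulCommutative G) :
    IsPowerful p G := by
  rw [IsPowerful, (commutator_eq_bot_iff G).mpr hG]
  exact bot_le

theorem Subgroup.ne_top_of_isMulCommutative {G : Type*} [Group G] (hG : ¬IsMulCommutative G)
    {H : Subgroup G} (hH : IsMulCommutative H) : H ≠ ⊤ := by
  rintro rfl
  exact hG (isMulCommutative_iff.mpr fun a b =>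
    isMulCommutative_iff_of_setLike.mp hH a (Subgroup.mem_top a) b (Subgroup.mem_top b))

theorem ZMod.eq_of_natCast_two_mul_eq {m i j : ℕ} (hi : 2 * i < m) (hj : 2 * j < m)
    (h : ((2 * i : ℕ) : ZMod m) = (2 * j : ℕ)) : i = j := by
  rw [ZMod.natCast_eq_natCast_iff', Nat.mod_eq_of_lt hi, Nat.mod_eq_of_lt hj] at h
  omega

theorem ZMod.exists_lt_and_eq_or_eq_add {m N : ℕ} [NeZero m] (hmN : m ≤ 2 * N) (j : ZMod m) :
    ∃ i < N, j = i ∨ j = i + N := by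
  have hj := ZMod.val_lt j
  by_cases h : j.val < N
  · exact ⟨j.val, h, Or.inl (ZMod.natCast_zmod_val j).symm⟩
  · refine ⟨j.val - N, by omega, Or.inr ?_⟩
    rw [← Nat.cast_add, Nat.sub_add_cancel (not_lt.mp h), ZMod.natCast_zmod_val]

theorem coveringNumbers_eq_of_isSubgroupCover {G : Type*} [Group G] {p b : ℕ}
    {S : Finset (Subgroup G)} (hS : IsSubgroupCover S) (hSab : ∀ H ∈ S, IsMulCommutative H)
    (hcard : S.card ≤ b)
    (hle : ∀ T : Finset (Subgroup G),
      IsSubgroupCover T → (∀ H ∈ T, IsPowerful p H) → b ≤ T.card) :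
    abelianCoveringNumber G = b ∧ powerfulCoveringNumber p G = b := by
  have hSpow : ∀ H ∈ S, IsPowerful p H := fun H hH =>
    isPowerful_of_isMulCommutative p (hSab H hH)
  have hcard : S.card = b := hcard.antisymm (hle S hS hSpow)
  constructor
  · refine IsLeast.csInf_eq
      ⟨⟨S, hcard, hS, fun H hH => isMulCommutative_iff_of_setLike.mp (hSab H hH)⟩, ?_⟩
    rintro _ ⟨T, rfl, hT, hTab⟩
    exact hle T hT fun H hH =>
      isPowerful_of_isMulCommutative p (isMulCommutative_iff_of_setLike.mpr (hTab H hH))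
  · refine IsLeast.csInf_eq ⟨⟨S, hcard, hS, hSpow⟩, ?_⟩
    rintro _ ⟨T, rfl, hT, hTpow⟩
    exact hle T hT hTpow

namespace DihedralGroup

open Subgroup

section

variable {m : ℕ}

theorem commutatorElement_sr_sr (a b : ZMod m) : ⁅sr a, sr b⁆ = r (2 * (b - a)) := by
  rw [commutatorElement_def, inv_sr, inv_sr, sr_mul_sr, r_mul_sr, sr_mul_sr]
  congr 1
  ring

theorem sr_pow_four (a : ZMod m) : sr a ^ 4 = 1 := by
  rw [show 4 = 2 * 2 from rfl, pow_mul, sq (sr a), sr_mul_self, one_pow]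

def rotationFourthPowers (H : Subgroup (DihedralGroup m)) : Subgroup (DihedralGroup m) where
  carrier := {g | ∃ x, r x ∈ H ∧ g = r (4 * x)}
  one_mem' := ⟨0, by rw [r_zero]; exact H.one_mem, by rw [mul_zero, r_zero]⟩
  mul_mem' := by
    rintro _ _ ⟨a, ha, rfl⟩ ⟨b, hb, rfl⟩
    exact ⟨a + b, r_mul_r a b ▸ H.mul_mem ha hb, by rw [r_mul_r, mul_add]⟩
  inv_mem' := by
    rintro _ ⟨a, ha, rfl⟩
    exact ⟨-a, inv_r a ▸ H.inv_mem ha, by rw [inv_r, mul_neg]⟩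

theorem closure_fourth_powers_le (H : Subgroup (DihedralGroup m)) :
    closure {x : H | ∃ g : H, x = g ^ 4} ≤ (rotationFourthPowers H).comap H.subtype := by
  rw [closure_le]
  rintro _ ⟨⟨g, hg⟩, rfl⟩
  change g ^ 4 ∈ rotationFourthPowers H
  cases g with
  | r x => exact ⟨x, hg, by rw [r_pow]; push_cast; ring_nf⟩
  | sr x => exact sr_pow_four x ▸ (rotationFourthPowers H).one_mem

theorem exists_two_mul_sub_eq_four_mul_of_isPowerful {H : Subgroup (DihedralGroup m)}
    (hH : IsPowerful 2 H) {a b : ZMod m} (ha : sr a ∈ H) (hb : sr b ∈ H) :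
    ∃ x, r x ∈ H ∧ 2 * (b - a) = 4 * x := by
  have hmem := closure_fourth_powers_le H <| isPowerful_two_iff.mp hH <|
    commutator_mem_commutator (mem_top (⟨sr a, ha⟩ : H)) (mem_top ⟨sr b, hb⟩)
  obtain ⟨x, hx, hrx⟩ := hmem
  rw [map_commutatorElement, coe_subtype, commutatorElement_sr_sr] at hrx
  exact ⟨x, hx, r.inj hrx⟩

theorem isMulCommutative_closure_sr_r {i h : ZMod m} (hh : 2 * h = 0) :
    IsMulCommutative (closure {sr i, r h}) := by
  refine isMulCommutative_closure ?_
  rintro _ (rfl | rfl) _ (rfl | rfl) <;>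
    simp only [sr_mul_r, r_mul_sr, sr.injEq]
  · linear_combination hh
  · linear_combination -hh

end

section

variable {n : ℕ}

theorem two_pow_eq_zero : (2 : ZMod (2 ^ n)) ^ n = 0 := by
  exact_mod_cast ZMod.natCast_self (2 ^ n)

theorem two_mul_eq_zero_of_isPowerful {H : Subgroup (DihedralGroup (2 ^ n))}
    (hH : IsPowerful 2 H) {a c : ZMod (2 ^ n)} (ha : sr a ∈ H) (hc : r c ∈ H) : 2 * c = 0 := by
  refine two_mul_eq_zero_of_forall_two_mul_eq_four_mul (s := {c | r c ∈ H}) two_pow_eq_zero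
    (fun c hc => ?_) c hc
  have hac : sr (a + c) ∈ H := sr_mul_r a c ▸ H.mul_mem ha hc
  simpa using exists_two_mul_sub_eq_four_mul_of_isPowerful hH ha hac

theorem r_one_notMem_of_isPowerful (hn : 2 ≤ n) {H : Subgroup (DihedralGroup (2 ^ n))}
    (hH : IsPowerful 2 H) {a : ZMod (2 ^ n)} (ha : sr a ∈ H) : r 1 ∉ H := by
  intro h1
  have h4 : 4 ≤ 2 ^ n := Nat.pow_le_pow_right two_pos hn
  have := ZMod.eq_of_natCast_two_mul_eq (m := 2 ^ n) (i := 1) (j := 0) (by omega) (by omega)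
    (by simpa using two_mul_eq_zero_of_isPowerful hH ha h1)
  omega

theorem eq_of_sr_mem_of_isPowerful {H : Subgroup (DihedralGroup (2 ^ n))}
    (hH : IsPowerful 2 H) {i j : ℕ} (hi : 2 * i < 2 ^ n) (hj : 2 * j < 2 ^ n)
    (hsi : sr (i : ZMod (2 ^ n)) ∈ H) (hsj : sr (j : ZMod (2 ^ n)) ∈ H) : i = j := by
  have h2 : 2 * (j - i : ZMod (2 ^ n)) = 0 :=
    two_mul_eq_zero_of_isPowerful hH hsi (sr_mul_sr (i : ZMod (2 ^ n)) j ▸ H.mul_mem hsi hsj)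
  refine ZMod.eq_of_natCast_two_mul_eq hi hj ?_
  push_cast
  linear_combination -h2

theorem two_pow_pred_add_one_le_card_of_isPowerful (hn : 2 ≤ n)
    {S : Finset (Subgroup (DihedralGroup (2 ^ n)))} (hS : IsSubgroupCover S)
    (hSpow : ∀ H ∈ S, IsPowerful 2 H) : 2 ^ (n - 1) + 1 ≤ S.card := by
  have hpow : 2 * 2 ^ (n - 1) = 2 ^ n := mul_pow_sub_one (by omega) 2
  let e : Option (Fin (2 ^ (n - 1))) → DihedralGroup (2 ^ n) := fun
    | none => r 1
    | some i => sr (i : ℕ)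
  have hsep : ∀ H ∈ S, ∀ a b, e a ∈ H → e b ∈ H → a = b := by
    intro H hH a b ha hb
    rcases a with _ | i <;> rcases b with _ | j
    · rfl
    · exact absurd ha (r_one_notMem_of_isPowerful hn (hSpow H hH) hb)
    · exact absurd hb (r_one_notMem_of_isPowerful hn (hSpow H hH) ha)
    · exact congrArg some <| Fin.ext <|
        eq_of_sr_mem_of_isPowerful (hSpow H hH) (by omega) (by omega) ha hb
  simpa using Finset.card_le_card_of_forall_subsingleton (s := Finset.univ) (fun a H => e a ∈ H)
    (fun a _ => hS.2 (e a)) (fun H hH a ha b hb => hsep H hH a b ha.2 hb.2)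

theorem exists_isSubgroupCover_card_le (hn : 2 ≤ n) :
    ∃ S : Finset (Subgroup (DihedralGroup (2 ^ n))),
      IsSubgroupCover S ∧ (∀ H ∈ S, IsMulCommutative H) ∧ S.card ≤ 2 ^ (n - 1) + 1 := by
  classical
  have hpow : 2 * 2 ^ (n - 1) = 2 ^ n := mul_pow_sub_one (by omega) 2
  have h4 : 4 ≤ 2 ^ n := Nat.pow_le_pow_right two_pos hn
  let K : ℕ → Subgroup (DihedralGroup (2 ^ n)) := fun i => closure {sr i, r (2 ^ (n - 1) : ℕ)}
  let S := insert (zpowers (r 1)) ((Finset.range (2 ^ (n - 1))).image K)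
  have hSab : ∀ H ∈ S, IsMulCommutative H := by
    simp only [S, Finset.mem_insert, Finset.mem_image]
    rintro H (rfl | ⟨i, -, rfl⟩)
    · infer_instance
    · refine isMulCommutative_closure_sr_r ?_
      have h0 : ((2 * 2 ^ (n - 1) : ℕ) : ZMod (2 ^ n)) = 0 := by rw [hpow, ZMod.natCast_self]
      exact_mod_cast h0
  refine ⟨S, ⟨fun H hH => ne_top_of_isMulCommutative (not_commutative (by omega) (by omega))
    (hSab H hH), ?_⟩, hSab, ?_⟩
  · rintro (j | j)
    · exact ⟨_, Finset.mem_insert_self _ _, ⟨(j.val : ℤ), by simp⟩⟩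
    · obtain ⟨i, hi, rfl | rfl⟩ := ZMod.exists_lt_and_eq_or_eq_add hpow.ge j <;>
        refine ⟨K i, Finset.mem_insert_of_mem <|
          Finset.mem_image_of_mem K (Finset.mem_range.mpr hi), ?_⟩
      · exact subset_closure (Set.mem_insert _ _)
      · rw [← sr_mul_r]
        exact mul_mem (subset_closure (Set.mem_insert _ _))
          (subset_closure (Set.mem_insert_of_mem _ rfl))
  · exact (Finset.card_insert_le _ _).trans <|
      Nat.succ_le_succ (Finset.card_image_le.trans (Finset.card_range _).le)

end

end DihedralGroup

/-- For `n ≥ 2`, the abelian covering number of `DihedralGroup (2^n)` equals its powerful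
covering number, and both equal `2^(n-1) + 1`. -/
theorem dihedral_abelian_eq_powerful_coveringNumber (n : ℕ) (hn : 2 ≤ n) :
    abelianCoveringNumber (DihedralGroup (2 ^ n)) =
        powerfulCoveringNumber 2 (DihedralGroup (2 ^ n)) ∧
      powerfulCoveringNumber 2 (DihedralGroup (2 ^ n)) = 2 ^ (n - 1) + 1 := by
  obtain ⟨S, hS, hSab, hcard⟩ := DihedralGroup.exists_isSubgroupCover_card_le hn
  obtain ⟨habel, hpow⟩ := coveringNumbers_eq_of_isSubgroupCover hS hSab hcard
    fun T hT hTpow => DihedralGroup.two_pow_pred_add_one_le_card_of_isPowerful hn hT hTpow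
  exact ⟨habel.trans hpow.symm, hpow⟩
end

section
/- Let n ≥ 3 and let G be the semidirect product of the cyclic group ZMod (2^n) by ZMod 2, where the nontrivial element of ZMod 2 acts on ZMod (2^n) by the automorphism sending z to (2^(n-1) + 1) · z (note (2^(n-1)+1)^2 ≡ 1 mod 2^n, so this is an order-two automorphism). Then G is a powerful 2-group, i.e., the commutator subgroup [G,G] is contained in the subgroup generated by the fourth powers of elements of G. -/
/-- For `n ≥ 3`, the semidirect product `ZMod (2^n) ⋊ ZMod 2`, where the nontrivial
element of `ZMod 2` acts on `ZMod (2^n)` by multiplication by `2^(n-1) + 1`, is a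
powerful `2`-group. -/
theorem semidirect_product_is_powerful (n : ℕ) (hn : 3 ≤ n)
    (φ : Multiplicative (ZMod 2) →* MulAut (Multiplicative (ZMod (2 ^ n))))
    (hφ : ∀ z : Multiplicative (ZMod (2 ^ n)),
      Multiplicative.toAdd (φ (Multiplicative.ofAdd (1 : ZMod 2)) z) =
        ((2 ^ (n - 1) + 1 : ZMod (2 ^ n))) * Multiplicative.toAdd z) :
    IsPowerful 2 (SemidirectProduct (Multiplicative (ZMod (2 ^ n)))
      (Multiplicative (ZMod 2)) φ) := by
  set u : ZMod (2^n) := 2 ^ (n - 1) + 1 with hu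
  have h2n : (2 : ZMod (2^n))^n = 0 := by
    rw [show ((2:ZMod (2^n)) = ((2:ℕ):ZMod (2^n))) by norm_cast, ← Nat.cast_pow,
      ZMod.natCast_self]
  have hsq : u * u = 1 := by
    have h1 : (2:ZMod (2^n))^(n-1) * 2^(n-1) = 2^(n-2) * 2^n := by
      rw [← pow_add, ← pow_add]; congr 1; omega
    have h2 : (2:ZMod (2^n))^(n-1) * 2 = 2^n := by
      rw [← pow_succ]; congr 1; omega
    simp only [hu]; ring_nf
    rw [show (n-1)*2 = (n-1)+(n-1) from by omega, pow_add, h1, h2, h2n]; ring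
  have h4 : (2:ZMod (2^n))^(n-1) = 4 * 2^(n-3) := by
    rw [show (4 : ZMod (2^n)) = 2^2 from by norm_num, ← pow_add]; congr 1; omega
  set c : Multiplicative (ZMod 2) → ZMod (2^n) :=
    fun s => if Multiplicative.toAdd s = 0 then 1 else u with hc
  have hφ' : ∀ (s : Multiplicative (ZMod 2)) (z : Multiplicative (ZMod (2 ^ n))),
      Multiplicative.toAdd (φ s z) = c s * Multiplicative.toAdd z := by
    intro s z
    have hs : Multiplicative.toAdd s = 0 ∨ Multiplicative.toAdd s = 1 := by
      revert s; decide
    rcases hs with hs | hs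
    · have h1 : s = 1 := Multiplicative.toAdd.injective (by simpa using hs)
      simp [h1, hc]
    · have h1 : s = Multiplicative.ofAdd (1 : ZMod 2) :=
        Multiplicative.toAdd.injective (by simpa using hs)
      rw [h1]
      simp only [hc, hs]
      simpa using hφ z
  rw [IsPowerful, commutator_def, Subgroup.commutator_le]
  intro g _ h _
  have key : ∀ s : Multiplicative (ZMod 2), s = 1 ∨ s = Multiplicative.ofAdd (1 : ZMod 2) := by
    decide
  have hc1 : c 1 = 1 := by simp [hc]
  have hcu : c (Multiplicative.ofAdd (1 : ZMod 2)) = u := by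
    simp only [hc, toAdd_ofAdd]
    norm_num
  have e1 : (Multiplicative.ofAdd (1 : ZMod 2))⁻¹ = Multiplicative.ofAdd (1 : ZMod 2) := by decide
  have e2 : Multiplicative.ofAdd (1 : ZMod 2) * Multiplicative.ofAdd (1 : ZMod 2) = 1 := by decide
  set A := Multiplicative.toAdd g.left with hA
  set B := Multiplicative.toAdd h.left with hB
  rcases key g.right with hgr | hgr <;> rcases key h.right with hhr | hhr
  · refine Subgroup.subset_closure ⟨SemidirectProduct.inl (Multiplicative.ofAdd ((0 : ZMod (2^n)))), ?_⟩
    apply SemidirectProduct.ext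
    · apply Multiplicative.toAdd.injective
      simp only [commutatorElement_def, SemidirectProduct.mul_left, SemidirectProduct.mul_right,
        SemidirectProduct.inv_left, SemidirectProduct.inv_right, hgr, hhr, one_mul, mul_one,
        inv_one, e1, e2, hc1, hcu, hφ', toAdd_mul, toAdd_inv, if_pos rfl, if_true, ← map_pow,
        SemidirectProduct.left_inl, toAdd_pow, toAdd_ofAdd, nsmul_eq_mul, Nat.cast_ofNat,
        ← hA, ← hB]
      linear_combination (0 : ZMod (2^n)) * hsq
    · simp only [commutatorElement_def, SemidirectProduct.mul_right, SemidirectProduct.inv_right,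
        hgr, hhr, one_mul, mul_one, inv_one, e1, e2, if_pos rfl, if_true, ← map_pow,
        SemidirectProduct.right_inl]
  · refine Subgroup.subset_closure ⟨SemidirectProduct.inl (Multiplicative.ofAdd (-((2:ZMod (2^n))^(n-3) * A))), ?_⟩
    apply SemidirectProduct.ext
    · apply Multiplicative.toAdd.injective
      simp only [commutatorElement_def, SemidirectProduct.mul_left, SemidirectProduct.mul_right,
        SemidirectProduct.inv_left, SemidirectProduct.inv_right, hgr, hhr, one_mul, mul_one,
        inv_one, e1, e2, hc1, hcu, hφ', toAdd_mul, toAdd_inv, if_pos rfl, if_true, ← map_pow,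
        SemidirectProduct.left_inl, toAdd_pow, toAdd_ofAdd, nsmul_eq_mul, Nat.cast_ofNat,
        ← hA, ← hB]
      linear_combination (-B)*hsq + (-A)*hu + (-A)*h4
    · simp only [commutatorElement_def, SemidirectProduct.mul_right, SemidirectProduct.inv_right,
        hgr, hhr, one_mul, mul_one, inv_one, e1, e2, if_pos rfl, if_true, ← map_pow,
        SemidirectProduct.right_inl]
  · refine Subgroup.subset_closure ⟨SemidirectProduct.inl (Multiplicative.ofAdd ((2:ZMod (2^n))^(n-3) * B)), ?_⟩
    apply SemidirectProduct.ext
    · apply Multiplicative.toAdd.injective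
      simp only [commutatorElement_def, SemidirectProduct.mul_left, SemidirectProduct.mul_right,
        SemidirectProduct.inv_left, SemidirectProduct.inv_right, hgr, hhr, one_mul, mul_one,
        inv_one, e1, e2, hc1, hcu, hφ', toAdd_mul, toAdd_inv, if_pos rfl, if_true, ← map_pow,
        SemidirectProduct.left_inl, toAdd_pow, toAdd_ofAdd, nsmul_eq_mul, Nat.cast_ofNat,
        ← hA, ← hB]
      linear_combination (-A)*hsq + B*hu + B*h4
    · simp only [commutatorElement_def, SemidirectProduct.mul_right, SemidirectProduct.inv_right,
        hgr, hhr, one_mul, mul_one, inv_one, e1, e2, if_pos rfl, if_true, ← map_pow,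
        SemidirectProduct.right_inl]
  · refine Subgroup.subset_closure ⟨SemidirectProduct.inl (Multiplicative.ofAdd ((2:ZMod (2^n))^(n-3) * (B - A))), ?_⟩
    apply SemidirectProduct.ext
    · apply Multiplicative.toAdd.injective
      simp only [commutatorElement_def, SemidirectProduct.mul_left, SemidirectProduct.mul_right,
        SemidirectProduct.inv_left, SemidirectProduct.inv_right, hgr, hhr, one_mul, mul_one,
        inv_one, e1, e2, hc1, hcu, hφ', toAdd_mul, toAdd_inv, if_pos rfl, if_true, ← map_pow,
        SemidirectProduct.left_inl, toAdd_pow, toAdd_ofAdd, nsmul_eq_mul, Nat.cast_ofNat,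
        ← hA, ← hB]
      linear_combination (-B)*hsq + (B-A)*hu + (B-A)*h4
    · simp only [commutatorElement_def, SemidirectProduct.mul_right, SemidirectProduct.inv_right,
        hgr, hhr, one_mul, mul_one, inv_one, e1, e2, if_pos rfl, if_true, ← map_pow,
        SemidirectProduct.right_inl]
end
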